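/- arXiv:1511.07026 — 2 statements merged into one kernel-verified Lean document; each statement's English description precedes it below -/
import Mathlib

section
/- Let H be a separable Hilbert space, P and P̄ be orthogonal projections with P + P̄ = 1, and let K be a bounded self-adjoint operator on H such that P̄ K P̄ is bounded invertible on P̄H. Define the Feshbach operator F(K) := P K P − P K P̄ (P̄ K P̄)^{-1} P̄ K P acting on PH. Then 0 is an eigenvalue of K if and only if 0 is an eigenvalue of F(K); moreover if K ψ = 0 with Pψ ≠ 0, then F(K)(Pψ) = 0, and conversely if F(K)φ = 0 with φ ∈ PH, φ ≠ 0, then ψ := φ − (P̄ K P̄)^{-1} P̄ K φ satisfies K ψ = 0 and Pψ = φ ≠ 0. -/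
open scoped RealInnerProductSpace

/-- isospectrality of the Feshbach map: let `P, Q` be orthogonal
projections with `P + Q = 1`, `K` a bounded self-adjoint operator such that `QKQ` is
bounded invertible on `ran Q` (with inverse `R` supported on `ran Q`).  With the
Feshbach operator `F(K) x := P K P x − P K Q R Q K P x` on `ran P`:
`0` is an eigenvalue of `K` iff `0` is an eigenvalue of `F(K)`; if `Kψ = 0` and
`Pψ ≠ 0` then `F(K)(Pψ) = 0`; conversely if `F(K)φ = 0` with `φ ∈ ran P`, `φ ≠ 0`,
then `ψ := φ − R Q K φ` satisfies `Kψ = 0` and `Pψ = φ`. -/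
theorem feshbach_isospectral
    {E : Type*} [NormedAddCommGroup E] [InnerProductSpace ℝ E] [CompleteSpace E]
    (P Q K R : E →L[ℝ] E)
    (hPsa : IsSelfAdjoint P) (hPidem : P.comp P = P)
    (hQsa : IsSelfAdjoint Q) (hQidem : Q.comp Q = Q)
    (hPQ : P + Q = 1)
    (hKsa : IsSelfAdjoint K)
    (hR1 : R.comp ((Q.comp K).comp Q) = Q)
    (hR2 : ((Q.comp K).comp Q).comp R = Q)
    (hR3 : (Q.comp R).comp Q = R) :
    ((∃ ψ : E, ψ ≠ 0 ∧ K ψ = 0) ↔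
      (∃ φ : E, φ ≠ 0 ∧ P φ = φ ∧
        P (K (P φ)) - P (K (Q (R (Q (K (P φ)))))) = 0)) ∧
    (∀ ψ : E, K ψ = 0 → P ψ ≠ 0 →
      P (K (P ψ)) - P (K (Q (R (Q (K (P ψ)))))) = 0) ∧
    (∀ φ : E, P φ = φ → φ ≠ 0 →
      P (K (P φ)) - P (K (Q (R (Q (K (P φ)))))) = 0 →
      K (φ - R (Q (K φ))) = 0 ∧ P (φ - R (Q (K φ))) = φ) := by
  have cP : ∀ x, P (P x) = P x := fun x => DFunLike.congr_fun hPidem x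
  have cQ : ∀ x, Q (Q x) = Q x := fun x => DFunLike.congr_fun hQidem x
  have hsum : ∀ x, P x + Q x = x := fun x => by
    have := DFunLike.congr_fun hPQ x; simpa using this
  have hQx : ∀ x, Q x = x - P x := fun x => eq_sub_of_add_eq' (hsum x)
  have hPQ0 : ∀ x, P (Q x) = 0 := fun x => by
    rw [hQx, map_sub, cP, sub_self]
  have hR3' : ∀ x, Q (R (Q x)) = R x := fun x => DFunLike.congr_fun hR3 x
  have hQR : ∀ x, Q (R x) = R x := fun x => by
    rw [← hR3' x, cQ]
  have hR1' : ∀ x, R (Q (K (Q x))) = Q x := fun x => DFunLike.congr_fun hR1 x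
  have hR2' : ∀ x, Q (K (Q (R x))) = Q x := fun x => DFunLike.congr_fun hR2 x
  have hPR : ∀ x, P (R x) = 0 := fun x => by rw [← hR3' x, hPQ0]
  have hQKR : ∀ x, Q (K (R x)) = Q x := fun x => by
    have h := hR2' x; rwa [hQR] at h
  -- claim 2
  have key2 : ∀ ψ : E, K ψ = 0 →
      P (K (P ψ)) - P (K (Q (R (Q (K (P ψ)))))) = 0 := by
    intro ψ hK
    have h1 : Q (K (P ψ)) + Q (K (Q ψ)) = 0 := by
      rw [← map_add, ← map_add, hsum ψ, hK, map_zero]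
    have h2 : Q (K (Q ψ)) = - Q (K (P ψ)) := by
      exact eq_neg_of_add_eq_zero_right h1
    have hQψ : R (Q (K (P ψ))) = - Q ψ := by
      have h3 := hR1' ψ
      rw [h2, map_neg] at h3
      exact neg_eq_iff_eq_neg.mp h3
    rw [hQR, hQψ, map_neg, map_neg, sub_neg_eq_add, ← map_add, ← map_add,
      hsum ψ, hK, map_zero]
  -- claim 3
  have key3 : ∀ φ : E, P φ = φ → φ ≠ 0 →
      P (K (P φ)) - P (K (Q (R (Q (K (P φ)))))) = 0 →
      K (φ - R (Q (K φ))) = 0 ∧ P (φ - R (Q (K φ))) = φ := by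
    intro φ hPφ hφ hF
    rw [hPφ, hQR] at hF
    constructor
    · have hPpart : P (K (φ - R (Q (K φ)))) = 0 := by
        rw [map_sub, map_sub]; exact hF
      have hQpart : Q (K (φ - R (Q (K φ)))) = 0 := by
        rw [map_sub, map_sub, hQKR, cQ, sub_self]
      have h := hsum (K (φ - R (Q (K φ))))
      rw [hPpart, hQpart] at h
      simpa using h.symm
    · rw [map_sub, hPR, hPφ, sub_zero]
  refine ⟨?_, fun ψ hK _ => key2 ψ hK, key3⟩
  constructor
  · rintro ⟨ψ, hψ, hK⟩
    by_cases hp : P ψ = 0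
    · exfalso
      have h1 : Q ψ = ψ := by
        have := hsum ψ; rw [hp, zero_add] at this; exact this
      have h2 := hR1' ψ
      rw [h1, hK, map_zero, map_zero] at h2
      exact hψ h2.symm
    · refine ⟨P ψ, hp, cP ψ, ?_⟩
      rw [cP]
      exact key2 ψ hK
  · rintro ⟨φ, hφ, hPφ, hF⟩
    obtain ⟨h1, h2⟩ := key3 φ hPφ hφ hF
    refine ⟨φ - R (Q (K φ)), ?_, h1⟩
    intro h0
    rw [h0, map_zero] at h2
    exact hφ h2.symm
end

section
/- Let H be a Hilbert space, P, P̄ orthogonal projections with P + P̄ = 1, K self-adjoint and bounded below, and suppose P̄ K P̄ ≥ δ P̄ on P̄H for some δ > 0. If additionally P K P̄ (P̄ K P̄)^{-1} P̄ K P ≤ P K P − μ P for some μ > 0 on PH, then the Feshbach operator F(K) = P K P − P K P̄ (P̄ K P̄)^{-1} P̄ K P satisfies F(K) ≥ μ P, and consequently K is bounded invertible on H. -/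
open scoped RealInnerProductSpace

/-! With `P + Q = 1` and `R` inverting `K` on `ran Q`, one has `Q ψ = R (K ψ - K (P ψ))`, and the
Feshbach operator satisfies `F(K) P ψ = (1 - K R) K ψ`. The coercivity `F(K) ≥ μ P` therefore bounds
`‖P ψ‖`, and then `‖Q ψ‖`, by a multiple of `‖K ψ‖`. A self-adjoint operator that is bounded below
in this sense is injective with closed range and dense range (its range is orthogonal to its
kernel), hence invertible. -/

theorem IsSelfAdjoint.isUnit_of_norm_le_mul_norm {𝕜 E : Type*} [RCLike 𝕜] [NormedAddCommGroup E]
    [InnerProductSpace 𝕜 E] [CompleteSpace E] {K : E →L[𝕜] E} (hK : IsSelfAdjoint K) {C : ℝ}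
    (hC : ∀ x, ‖x‖ ≤ C * ‖K x‖) : IsUnit K := by
  have hanti : AntilipschitzWith C.toNNReal K :=
    K.antilipschitz_of_bound fun x => (hC x).trans
      (mul_le_mul_of_nonneg_right (Real.le_coe_toNNReal C) (norm_nonneg _))
  rw [ContinuousLinearMap.isUnit_iff_bijective,
    ContinuousLinearMap.bijective_iff_dense_range_and_antilipschitz]
  refine ⟨?_, _, hanti⟩
  rw [Submodule.topologicalClosure_eq_top_iff, hK.isSymmetric.orthogonal_range,
    LinearMap.ker_eq_bot]
  exact hanti.injective

section FeshbachBound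

variable {E : Type*} [NormedAddCommGroup E] [InnerProductSpace ℝ E] {P Q K R : E →L[ℝ] E}

theorem norm_le_div_of_mul_sq_le_inner {x y : E} {μ : ℝ} (hμ : 0 < μ)
    (h : μ * ‖x‖ ^ 2 ≤ ⟪x, y⟫) : ‖x‖ ≤ ‖y‖ / μ := by
  rcases (norm_nonneg x).eq_or_lt with hx | hx
  · rw [← hx]; positivity
  rw [le_div_iff₀ hμ]
  have : ‖x‖ * (‖x‖ * μ) ≤ ‖x‖ * ‖y‖ := by
    nlinarith [real_inner_le_norm x y]
  exact le_of_mul_le_mul_left this hx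

theorem comp_comp_eq_of_comp_compression_eq (hQ : Q.comp Q = Q)
    (hR : R.comp ((Q.comp K).comp Q) = Q) (hRQ : (Q.comp R).comp Q = R) :
    (R.comp K).comp Q = Q := by
  have hRQ' : R.comp Q = R := by rw [← hRQ, ContinuousLinearMap.comp_assoc, hQ]
  calc (R.comp K).comp Q = ((R.comp Q).comp K).comp Q := by rw [hRQ']
    _ = Q := hR

theorem apply_add_apply_of_add_eq_one (hPQ : P + Q = 1) (ψ : E) : P ψ + Q ψ = ψ := by
  simpa using congrArg (fun T : E →L[ℝ] E => T ψ) hPQ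

theorem compl_apply_eq_of_add_eq_one (hPQ : P + Q = 1) (hRKQ : (R.comp K).comp Q = Q) (ψ : E) :
    Q ψ = R (K ψ - K (P ψ)) := by
  rw [← map_sub, ← eq_sub_of_add_eq' (apply_add_apply_of_add_eq_one hPQ ψ)]
  exact (congrArg (fun T : E →L[ℝ] E => T ψ) hRKQ).symm

theorem feshbach_apply_eq (hPQ : P + Q = 1) (hRKQ : (R.comp K).comp Q = Q) (ψ : E) :
    K (P ψ) - K (R (K (P ψ))) = (1 - K.comp R) (K ψ) := by
  have hψ : K ψ = K (P ψ) + K (Q ψ) := by rw [← map_add, apply_add_apply_of_add_eq_one hPQ]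
  have hQ : K (Q ψ) = K (R (K ψ)) - K (R (K (P ψ))) := by
    rw [compl_apply_eq_of_add_eq_one hPQ hRKQ, map_sub, map_sub]
  simp only [sub_apply, one_apply_eq_self, ContinuousLinearMap.comp_apply]
  linear_combination (norm := abel) -hψ - hQ

theorem norm_apply_le_of_feshbach_coercive (hPQ : P + Q = 1) (hRKQ : (R.comp K).comp Q = Q)
    {μ : ℝ} (hμ : 0 < μ)
    (hF : ∀ ψ, μ * ‖P ψ‖ ^ 2 ≤ ⟪P ψ, K (P ψ)⟫ - ⟪P ψ, K (R (K (P ψ)))⟫) (ψ : E) :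
    ‖P ψ‖ ≤ ‖1 - K.comp R‖ / μ * ‖K ψ‖ := by
  have h : μ * ‖P ψ‖ ^ 2 ≤ ⟪P ψ, (1 - K.comp R) (K ψ)⟫ := by
    rw [← feshbach_apply_eq hPQ hRKQ, inner_sub_right]
    exact hF ψ
  calc ‖P ψ‖ ≤ ‖(1 - K.comp R) (K ψ)‖ / μ := norm_le_div_of_mul_sq_le_inner hμ h
    _ ≤ ‖1 - K.comp R‖ * ‖K ψ‖ / μ := by gcongr; exact ContinuousLinearMap.le_opNorm _ _
    _ = ‖1 - K.comp R‖ / μ * ‖K ψ‖ := by ring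

theorem norm_compl_apply_le (hPQ : P + Q = 1) (hRKQ : (R.comp K).comp Q = Q) (ψ : E) :
    ‖Q ψ‖ ≤ ‖R‖ * (‖K ψ‖ + ‖K‖ * ‖P ψ‖) := by
  rw [compl_apply_eq_of_add_eq_one hPQ hRKQ]
  calc ‖R (K ψ - K (P ψ))‖ ≤ ‖R‖ * ‖K ψ - K (P ψ)‖ := R.le_opNorm _
    _ ≤ ‖R‖ * (‖K ψ‖ + ‖K‖ * ‖P ψ‖) := by
      gcongr
      exact (norm_sub_le _ _).trans (add_le_add_right (K.le_opNorm _) _)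

theorem norm_le_mul_norm_apply_of_feshbach_coercive (hPQ : P + Q = 1)
    (hRKQ : (R.comp K).comp Q = Q) {μ : ℝ} (hμ : 0 < μ)
    (hF : ∀ ψ, μ * ‖P ψ‖ ^ 2 ≤ ⟪P ψ, K (P ψ)⟫ - ⟪P ψ, K (R (K (P ψ)))⟫) (ψ : E) :
    ‖ψ‖ ≤ ((1 + ‖R‖ * ‖K‖) * (‖1 - K.comp R‖ / μ) + ‖R‖) * ‖K ψ‖ := by
  have hP := norm_apply_le_of_feshbach_coercive hPQ hRKQ hμ hF ψ
  calc ‖ψ‖ = ‖P ψ + Q ψ‖ := by rw [apply_add_apply_of_add_eq_one hPQ]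
    _ ≤ ‖P ψ‖ + ‖R‖ * (‖K ψ‖ + ‖K‖ * ‖P ψ‖) :=
      (norm_add_le _ _).trans (add_le_add_right (norm_compl_apply_le hPQ hRKQ ψ) _)
    _ = (1 + ‖R‖ * ‖K‖) * ‖P ψ‖ + ‖R‖ * ‖K ψ‖ := by ring
    _ ≤ (1 + ‖R‖ * ‖K‖) * (‖1 - K.comp R‖ / μ * ‖K ψ‖) + ‖R‖ * ‖K ψ‖ := by gcongr
    _ = _ := by ring

end FeshbachBound

theorem feshbach_positivity_general
    {E : Type*} [NormedAddCommGroup E] [InnerProductSpace ℝ E] [CompleteSpace E]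
    (P Q K R : E →L[ℝ] E) (μ : ℝ)
    (hQidem : Q.comp Q = Q)
    (hPQ : P + Q = 1)
    (hKsa : IsSelfAdjoint K)
    (hR1 : R.comp ((Q.comp K).comp Q) = Q)
    (hR3 : (Q.comp R).comp Q = R)
    (hμ : 0 < μ)
    (hform : ∀ ψ : E,
      ⟪P ψ, K (Q (R (Q (K (P ψ)))))⟫ ≤ ⟪P ψ, K (P ψ)⟫ - μ * ‖P ψ‖ ^ 2) :
    (∀ ψ : E, μ * ‖P ψ‖ ^ 2 ≤
      ⟪P ψ, K (P ψ)⟫ - ⟪P ψ, K (Q (R (Q (K (P ψ)))))⟫) ∧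
    ∃ S : E →L[ℝ] E, K.comp S = 1 ∧ S.comp K = 1 := by
  have hF : ∀ ψ : E, μ * ‖P ψ‖ ^ 2 ≤ ⟪P ψ, K (P ψ)⟫ - ⟪P ψ, K (Q (R (Q (K (P ψ)))))⟫ :=
    fun ψ => by linarith [hform ψ]
  refine ⟨hF, ?_⟩
  have hRKQ := comp_comp_eq_of_comp_compression_eq hQidem hR1 hR3
  have hQRQ (x : E) : Q (R (Q x)) = R x := congrArg (fun T : E →L[ℝ] E => T x) hR3
  simp only [hQRQ] at hF
  obtain ⟨S, rfl⟩ := hKsa.isUnit_of_norm_le_mul_norm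
    (norm_le_mul_norm_apply_of_feshbach_coercive hPQ hRKQ hμ hF)
  exact ⟨↑S⁻¹, S.mul_inv, S.inv_mul⟩

/-- positivity/invertibility transfer for the Feshbach map: if `K` is
self-adjoint and bounded below, `QKQ ≥ δ Q` on `ran Q` (with bounded inverse `R` there),
and `P K Q (QKQ)⁻¹ Q K P ≤ P K P − μ P` on `ran P`, then the Feshbach operator
satisfies `F(K) ≥ μ P`, and consequently `K` is bounded invertible. -/
theorem feshbach_positivity
    {E : Type*} [NormedAddCommGroup E] [InnerProductSpace ℝ E] [CompleteSpace E]
    (P Q K R : E →L[ℝ] E) (μ δ : ℝ)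
    (hPsa : IsSelfAdjoint P) (hPidem : P.comp P = P)
    (hQsa : IsSelfAdjoint Q) (hQidem : Q.comp Q = Q)
    (hPQ : P + Q = 1)
    (hKsa : IsSelfAdjoint K)
    (hKlb : ∃ mlb : ℝ, ∀ ψ : E, mlb * ‖ψ‖ ^ 2 ≤ ⟪ψ, K ψ⟫)
    (hδ : 0 < δ)
    (hQKQ : ∀ ψ : E, δ * ‖Q ψ‖ ^ 2 ≤ ⟪Q ψ, K (Q ψ)⟫)
    (hR1 : R.comp ((Q.comp K).comp Q) = Q)
    (hR2 : ((Q.comp K).comp Q).comp R = Q)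
    (hR3 : (Q.comp R).comp Q = R)
    (hμ : 0 < μ)
    (hform : ∀ ψ : E,
      ⟪P ψ, K (Q (R (Q (K (P ψ)))))⟫ ≤ ⟪P ψ, K (P ψ)⟫ - μ * ‖P ψ‖ ^ 2) :
    (∀ ψ : E, μ * ‖P ψ‖ ^ 2 ≤
      ⟪P ψ, K (P ψ)⟫ - ⟪P ψ, K (Q (R (Q (K (P ψ)))))⟫) ∧
    ∃ S : E →L[ℝ] E, K.comp S = 1 ∧ S.comp K = 1 :=
  feshbach_positivity_general P Q K R μ hQidem hPQ hKsa hR1 hR3 hμ hform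
end
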